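/- arXiv:2110.11943 — 2 statements merged into one kernel-verified Lean document; each statement's English description precedes it below -/
import Mathlib

section
/- For each N ≥ 1, (1/(N·2^N)) · Σ_{m=1}^{N} C(N-1, m) · max{N/2 − m − 1, m + 1 − N/2} ≤ (1/N) + (1/(2√(N-1))) for N ≥ 2 (i.e., the average deviation incentive is bounded by O(1/√N)). -/
open Finset

/-! With `n = N - 1` the summand is `C(n, m) · |2m - n + 1| / 2 ≤ C(n, m) · (|2m - n| + 1) / 2`.
The binomial mean absolute deviation `∑ C(n, m) |2m - n|` is at most `2^n √n` by Cauchy–Schwarz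
against the variance identity `∑ C(n, m) (2m - n)² = n 2^n`, which follows from Pascal's rule. -/

theorem sum_range_choose_real (n : ℕ) : ∑ i ∈ range (n + 1), (n.choose i : ℝ) = 2 ^ n := by
  exact_mod_cast Nat.sum_range_choose n

theorem sum_range_choose_mul_two_mul_sub_sq (n : ℕ) :
    ∑ i ∈ range (n + 1), (n.choose i : ℝ) * (2 * i - n) ^ 2 = (n * 2 ^ n : ℝ) := by
  induction n with
  | zero => simp
  | succ n ih =>
    have pascal := sum_choose_succ_mul (fun i j => ((i : ℝ) - j) ^ 2) n
    have hlhs : ∀ i ∈ range (n + 2), ((n + 1).choose i : ℝ) * ((i : ℝ) - ↑(n + 1 - i)) ^ 2 =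
        ((n + 1).choose i : ℝ) * (2 * i - ↑(n + 1)) ^ 2 := fun i hi => by
      rw [Nat.cast_sub (mem_range_succ_iff.mp hi)]; ring
    have hrhs : ∀ i ∈ range (n + 1), (n.choose i : ℝ) * ((i : ℝ) - ↑(n + 1 - i)) ^ 2 +
        (n.choose i : ℝ) * (((i + 1 : ℕ) : ℝ) - ↑(n - i)) ^ 2 =
        2 * ((n.choose i : ℝ) * (2 * i - n) ^ 2) + 2 * n.choose i := fun i hi => by
      have hin := mem_range_succ_iff.mp hi
      rw [Nat.cast_sub hin, Nat.cast_sub (hin.trans n.le_succ)]; push_cast; ring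
    rw [sum_congr rfl hlhs, ← sum_add_distrib, sum_congr rfl hrhs, sum_add_distrib, ← mul_sum,
      ← mul_sum, ih] at pascal
    rw [pascal, sum_range_choose_real]
    push_cast
    ring

theorem sum_range_choose_mul_abs_two_mul_sub_le (n : ℕ) :
    ∑ i ∈ range (n + 1), (n.choose i : ℝ) * |2 * (i : ℝ) - n| ≤ 2 ^ n * √n := by
  have cauchy_schwarz := sum_sq_le_sum_mul_sum_of_sq_le_mul (range (n + 1))
    (r := fun i => (n.choose i : ℝ) * |2 * (i : ℝ) - n|) (f := fun i => (n.choose i : ℝ))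
    (g := fun i => (n.choose i : ℝ) * (2 * i - n) ^ 2)
    (fun _ _ => by positivity) (fun _ _ => by positivity)
    (fun _ _ => by rw [mul_pow, sq_abs]; nlinarith)
  rw [sum_range_choose_real, sum_range_choose_mul_two_mul_sub_sq] at cauchy_schwarz
  refine (pow_le_pow_iff_left₀ (sum_nonneg fun _ _ => by positivity) (by positivity)
    two_ne_zero).mp ?_
  rw [mul_pow, Real.sq_sqrt n.cast_nonneg]
  linarith

theorem sum_Icc_choose_mul_max_le (n : ℕ) :
    ∑ m ∈ Icc 1 (n + 1), (n.choose m : ℝ) *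
        max (((n : ℝ) + 1) / 2 - m - 1) (m + 1 - ((n : ℝ) + 1) / 2) ≤ 2 ^ n * (√n + 1) / 2 := by
  have hmax : ∀ m : ℕ, max (((n : ℝ) + 1) / 2 - m - 1) (m + 1 - ((n : ℝ) + 1) / 2) =
      |2 * (m : ℝ) - n + 1| / 2 := fun m => by
    rw [show ((n : ℝ) + 1) / 2 - m - 1 = -(m + 1 - ((n : ℝ) + 1) / 2) by ring, max_comm,
      ← abs_eq_max_neg, show (m : ℝ) + 1 - ((n : ℝ) + 1) / 2 = (2 * m - n + 1) / 2 by ring,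
      abs_div, abs_two]
  have hsub : Icc 1 (n + 1) ⊆ range (n + 2) := fun m hm => by
    simp only [mem_Icc, mem_range] at hm ⊢; omega
  calc ∑ m ∈ Icc 1 (n + 1), (n.choose m : ℝ) *
        max (((n : ℝ) + 1) / 2 - m - 1) (m + 1 - ((n : ℝ) + 1) / 2)
      ≤ ∑ m ∈ range (n + 2), (n.choose m : ℝ) * (|2 * (m : ℝ) - n + 1| / 2) := by
        simp only [hmax]
        exact sum_le_sum_of_subset_of_nonneg hsub fun _ _ _ => by positivity
    _ = ∑ m ∈ range (n + 1), (n.choose m : ℝ) * (|2 * (m : ℝ) - n + 1| / 2) := by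
        simp [sum_range_succ _ (n + 1)]
    _ ≤ ∑ m ∈ range (n + 1), (n.choose m : ℝ) * ((|2 * (m : ℝ) - n| + 1) / 2) := by
        gcongr
        exact (abs_add_le _ _).trans_eq (by rw [abs_one])
    _ = ((∑ m ∈ range (n + 1), (n.choose m : ℝ) * |2 * (m : ℝ) - n|) +
          ∑ m ∈ range (n + 1), (n.choose m : ℝ)) / 2 := by
        rw [← sum_add_distrib, sum_div]
        exact sum_congr rfl fun _ _ => by ring
    _ ≤ 2 ^ n * (√n + 1) / 2 := by
        rw [sum_range_choose_real]
        linarith [sum_range_choose_mul_abs_two_mul_sub_le n]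

theorem sqrt_add_one_div_four_mul_le (x : ℝ) (hx : 0 ≤ x) :
    (√x + 1) / (4 * (x + 1)) ≤ 1 / (x + 1) + 1 / (2 * √x) := by
  have hx1 : 0 < x + 1 := by linarith
  rw [add_div, add_comm]
  gcongr ?_ + ?_
  · rw [div_le_div_iff₀ (by positivity) hx1]; linarith
  · rcases (Real.sqrt_nonneg x).eq_or_lt with h | h
    · rw [← h]; simp
    · rw [div_le_div_iff₀ (by positivity) (by positivity)]
      nlinarith [Real.sq_sqrt hx]

theorem pigou_avg_deviation_incentive_bound_general (N : ℕ) :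
    (1 / (N * 2 ^ N : ℝ)) * ∑ m ∈ Finset.Icc 1 N, ((N - 1).choose m : ℝ) *
        max ((N : ℝ) / 2 - (m : ℝ) - 1) ((m : ℝ) + 1 - (N : ℝ) / 2) ≤
      1 / N + 1 / (2 * Real.sqrt ((N : ℝ) - 1)) := by
  rcases N with _ | n
  · simp
  push_cast
  rw [add_sub_cancel_right]
  calc 1 / ((n + 1) * 2 ^ (n + 1) : ℝ) * ∑ m ∈ Icc 1 (n + 1), (n.choose m : ℝ) *
        max (((n : ℝ) + 1) / 2 - m - 1) (m + 1 - ((n : ℝ) + 1) / 2)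
      ≤ 1 / ((n + 1) * 2 ^ (n + 1) : ℝ) * (2 ^ n * (√n + 1) / 2) := by
        gcongr; exact sum_Icc_choose_mul_max_le n
    _ = (√n + 1) / (4 * (n + 1)) := by
        field_simp; ring
    _ ≤ 1 / (n + 1) + 1 / (2 * √n) := sqrt_add_one_div_four_mul_le n n.cast_nonneg

/-- For `N ≥ 2`, the average deviation incentive
`(1/(N·2^N)) · Σ_{m=1}^{N} C(N-1, m) · max{N/2 − m − 1, m + 1 − N/2}`
is bounded by `1/N + 1/(2·√(N−1))`, i.e. it is `O(1/√N)`. -/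
theorem pigou_avg_deviation_incentive_bound (N : ℕ) (hN : 2 ≤ N) :
    (1 / (N * 2 ^ N : ℝ)) * ∑ m ∈ Finset.Icc 1 N, ((N - 1).choose m : ℝ) *
        max ((N : ℝ) / 2 - (m : ℝ) - 1) ((m : ℝ) + 1 - (N : ℝ) / 2) ≤
      1 / N + 1 / (2 * Real.sqrt ((N : ℝ) - 1)) :=
  pigou_avg_deviation_incentive_bound_general N
end

section
/- Consider the two-link network with discontinuous congestion costs c_ℓ(μ) = 1 if μ < 1/2 and 2 otherwise, and c_{ℓ'}(μ) = 1 if μ ≤ 1/2 and 2 otherwise, where μ is the proportion of the population on the link. Then no distribution (1−x, x) ∈ [0,1]² with x the proportion on ℓ is a Wardrop/mean-field equilibrium. -/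
noncomputable def cLink (μ : ℝ) : ℝ := if μ < 1 / 2 then 1 else 2

noncomputable def cLink' (μ : ℝ) : ℝ := if μ ≤ 1 / 2 then 1 else 2

/-! Below `x = 1/2` link ℓ is strictly cheaper, so the positive mass `1 - x` on ℓ' wants to
move; from `x = 1/2` on, ℓ already costs `2` while ℓ' carries at most half and costs `1`,
so the positive mass `x` on ℓ wants to move. The two thresholds leave no crossing point. -/

theorem cLink_lt_cLink'_one_sub {x : ℝ} (hx : x < 1 / 2) : cLink x < cLink' (1 - x) := by
  rw [cLink, cLink', if_pos hx, if_neg (by linarith)]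
  norm_num

theorem cLink'_one_sub_lt_cLink {x : ℝ} (hx : 1 / 2 ≤ x) : cLink' (1 - x) < cLink x := by
  rw [cLink, cLink', if_neg hx.not_gt, if_pos (by linarith)]
  norm_num

/-- With the discontinuous congestion costs `cLink` and `cLink'`, no distribution putting
proportion `x ∈ [0,1]` on link ℓ and `1 − x` on link ℓ' is a Wardrop / mean-field
equilibrium: there is no `x` such that every used link has minimal cost. -/
theorem no_equilibrium_discontinuous_costs :
    ¬ ∃ x : ℝ, x ∈ Set.Icc (0 : ℝ) 1 ∧
      (0 < x → cLink x ≤ cLink' (1 - x)) ∧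
      (x < 1 → cLink' (1 - x) ≤ cLink x) := by
  rintro ⟨x, -, hℓ_used, hℓ'_used⟩
  rcases lt_or_ge x (1 / 2) with hx | hx
  · exact (hℓ'_used (by linarith)).not_gt (cLink_lt_cLink'_one_sub hx)
  · exact (hℓ_used (by linarith)).not_gt (cLink'_one_sub_lt_cLink hx)
end
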